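/- arXiv:1307.5090 — 2 statements merged into one kernel-verified Lean document; each statement's English description precedes it below -/
import Mathlib

section
/- Fix an integer q ≥ 2 and let (x_1, y_2, y_3) ∼ D_BTW. Then: (1) x_1 is uniform on {−1, q}, and y_2 and y_3 are each uniform on [q]; (2) y_2 and y_3 are each independent of x_1; (3) the pair (y_2, y_3) has the same joint distribution as (y_3, y_2); (4) E[BTW(x_1, y_2, y_3)] ≥ 1 − 1/q, where BTW is evaluated via its extension to ℤ^3. -/
open Classical Finset

noncomputable section
namespace OCSPPaper

/-- A permutation `σ` is compatible with the tuple `a` if `σ i < σ j` whenever `a i < a j`. -/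
def compatiblePerm {m : ℕ} (a : Fin m → ℤ) (σ : Equiv.Perm (Fin m)) : Prop :=
  ∀ i j : Fin m, a i < a j → σ i < σ j

/-- The extension of an ordering predicate `P ⊆ S_m` to arbitrary integer tuples:
the fraction of compatible permutations that belong to `P`. -/
noncomputable def extPred {m : ℕ} (P : Finset (Equiv.Perm (Fin m))) (a : Fin m → ℤ) : ℝ :=
  ((Finset.univ.filter fun σ => compatiblePerm a σ ∧ σ ∈ P).card : ℝ) /
    ((Finset.univ.filter fun σ => compatiblePerm a σ).card : ℝ)

/-- The betweenness predicate `BTW ⊆ S_3`: the third element lies strictly between the first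
two, i.e. its rank is the middle one. -/
def btwPerm3 : Finset (Equiv.Perm (Fin 3)) :=
  Finset.univ.filter fun σ => σ 2 = 1

/-- Density of the distribution `D_BTW` on `ℤ³`: `x₁` is uniform on `{-1, q}`, `y₂` is
uniform on `[q]`, and `y₃ = y₂ + 1 mod q` if `x₁ = q`, else `y₃ = y₂ - 1 mod q`. -/
noncomputable def dBTW (q : ℕ) : ℤ × ℤ × ℤ → ℝ := fun p =>
  if (p.1 = (q : ℤ) ∨ p.1 = -1) ∧ 0 ≤ p.2.1 ∧ p.2.1 < (q : ℤ) ∧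
      p.2.2 = (p.2.1 + if p.1 = (q : ℤ) then 1 else -1) % (q : ℤ)
  then 1 / (2 * (q : ℝ)) else 0

/-!
`D_BTW` is the image of the uniform distribution on `{-1, q} × [q]` under
`(x, y) ↦ (x, y, y ± 1 mod q)`, so a sum against it is an average over these `2q` points. Since
`y ↦ y ± 1 mod q` permutes `[q]`, the third coordinate is uniform given either value of `x₁`,
which gives the marginals and the independence; the shift by `-1` inverts the shift by `+1`,
which gives the exchangeability. For each `x₁`, all `y₂` but the one where the shift wraps
around put `y₃` strictly between `x₁` and `y₂`, so `BTW` holds with probability at least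
`1 - 1/q`.
-/

theorem exists_compatiblePerm {m : ℕ} (a : Fin m → ℤ) : ∃ σ, compatiblePerm a σ := by
  refine ⟨(Tuple.sort a)⁻¹, fun i j hij => lt_of_not_ge fun hji => hij.not_ge ?_⟩
  simpa using Tuple.monotone_sort a hji

theorem extPred_nonneg {m : ℕ} (P : Finset (Equiv.Perm (Fin m))) (a : Fin m → ℤ) :
    0 ≤ extPred P a := by
  unfold extPred; positivity

theorem extPred_eq_one {m : ℕ} {P : Finset (Equiv.Perm (Fin m))} {a : Fin m → ℤ}
    (h : ∀ σ, compatiblePerm a σ → σ ∈ P) : extPred P a = 1 := by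
  obtain ⟨σ, hσ⟩ := exists_compatiblePerm a
  have hpos : (0 : ℝ) < #(univ.filter fun σ => compatiblePerm a σ) := by
    exact_mod_cast card_pos.2 ⟨σ, by simpa using hσ⟩
  rw [extPred, filter_congr fun τ _ => and_iff_left_of_imp (h τ), div_self hpos.ne']

theorem extPred_btwPerm3_eq_one {a : Fin 3 → ℤ}
    (h : a 0 < a 2 ∧ a 2 < a 1 ∨ a 1 < a 2 ∧ a 2 < a 0) : extPred btwPerm3 a = 1 := by
  refine extPred_eq_one fun σ hσ => ?_
  simp only [btwPerm3, mem_filter, mem_univ, true_and, Fin.ext_iff]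
  rcases h with ⟨h₁, h₂⟩ | ⟨h₁, h₂⟩
  · have := hσ _ _ h₁; have := hσ _ _ h₂; omega
  · have := hσ _ _ h₁; have := hσ _ _ h₂; omega

theorem eq_emod_iff_modEq {q v w : ℤ} (hq : 0 < q) :
    v = w % q ↔ 0 ≤ v ∧ v < q ∧ v ≡ w [ZMOD q] := by
  constructor
  · rintro rfl
    exact ⟨Int.emod_nonneg _ hq.ne', Int.emod_lt_of_pos _ hq, Int.mod_modEq _ _⟩
  · rintro ⟨h₀, h₁, h⟩
    rw [← h, Int.emod_eq_of_lt h₀ h₁]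

theorem sum_Ico_emod_add {M : Type*} [AddCommMonoid M] {q : ℤ} (hq : 0 < q) (s : ℤ)
    (f : ℤ → M) : ∑ y ∈ Ico 0 q, f ((y + s) % q) = ∑ y ∈ Ico 0 q, f y := by
  have hmem : ∀ t y, (y + t) % q ∈ Ico 0 q := fun t y =>
    mem_Ico.2 ⟨Int.emod_nonneg _ hq.ne', Int.emod_lt_of_pos _ hq⟩
  have hinv : ∀ t y, y ∈ Ico 0 q → ((y + t) % q + -t) % q = y := fun t y hy => by
    obtain ⟨h₀, h₁⟩ := mem_Ico.1 hy
    rw [eq_comm, eq_emod_iff_modEq hq]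
    refine ⟨h₀, h₁, ?_⟩
    simpa using ((Int.mod_modEq (y + t) q).add_right (-t)).symm
  exact sum_nbij' (fun y => (y + s) % q) (fun y => (y + -s) % q) (fun y _ => hmem _ _)
    (fun y _ => hmem _ _) (fun y hy => hinv s y hy) (fun y hy => by simpa using hinv (-s) y hy)
    fun _ _ => rfl

theorem neg_one_ne_natCast (q : ℕ) : (-1 : ℤ) ≠ q := by omega

def dBTWThird (q : ℕ) (x y : ℤ) : ℤ := (y + if x = (q : ℤ) then 1 else -1) % (q : ℤ)

theorem finsum_dBTW_mul (q : ℕ) (g : ℤ × ℤ × ℤ → ℝ) :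
    ∑ᶠ p, dBTW q p * g p =
      1 / (2 * q) * ∑ x ∈ {-1, (q : ℤ)}, ∑ y ∈ Ico 0 (q : ℤ), g (x, y, dBTWThird q x y) := by
  set e : ℤ × ℤ → ℤ × ℤ × ℤ := fun xy => (xy.1, xy.2, dBTWThird q xy.1 xy.2)
  have he : Function.Injective e := fun xy xy' h => by
    simp only [e, Prod.mk.injEq] at h
    exact Prod.ext h.1 h.2.1
  have hsupp : Function.support (fun p => dBTW q p * g p) ⊆
      ((({-1, (q : ℤ)} : Finset ℤ) ×ˢ Ico 0 (q : ℤ)).image e : Finset _) := by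
    intro p hp
    have hp := left_ne_zero_of_mul hp
    rw [dBTW, ne_eq, ite_eq_right_iff, Classical.not_imp] at hp
    obtain ⟨⟨hx, h₀, h₁, h₂⟩, -⟩ := hp
    refine mem_coe.2 (mem_image.2 ⟨(p.1, p.2.1), ?_, ?_⟩)
    · simp only [mem_product, mem_insert, mem_singleton, mem_Ico]; tauto
    · simp [e, dBTWThird, ← h₂]
  rw [finsum_eq_sum_of_support_subset _ hsupp, sum_image fun _ _ _ _ h => he h,
    sum_product, mul_sum]
  refine sum_congr rfl fun x hx => ?_
  rw [mul_sum]
  refine sum_congr rfl fun y hy => ?_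
  have hx : x = q ∨ x = -1 := by simpa [or_comm] using hx
  rw [dBTW, if_pos ⟨hx, (mem_Ico.1 hy).1, (mem_Ico.1 hy).2, rfl⟩]

/- The predicate is curried so that, once `P` is instantiated, the decidability instances of the
resulting `if`s are the plain ones that `simp` lemmas match. -/
theorem finsum_ite_dBTW (q : ℕ) (P : ℤ → ℤ → ℤ → Prop) [∀ x y z, Decidable (P x y z)] :
    ∑ᶠ p : ℤ × ℤ × ℤ, (if P p.1 p.2.1 p.2.2 then dBTW q p else 0) =
      1 / (2 * q) * ∑ x ∈ {-1, (q : ℤ)}, ∑ y ∈ Ico 0 (q : ℤ),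
        if P x y (dBTWThird q x y) then 1 else 0 := by
  simpa only [mul_boole] using finsum_dBTW_mul q fun p => if P p.1 p.2.1 p.2.2 then 1 else 0

section

variable {q : ℕ}

theorem sum_Ico_dBTWThird {M : Type*} [AddCommMonoid M] (hq : 0 < q) (x : ℤ) (f : ℤ → M) :
    ∑ y ∈ Ico 0 (q : ℤ), f (dBTWThird q x y) = ∑ y ∈ Ico 0 (q : ℤ), f y :=
  sum_Ico_emod_add (by exact_mod_cast hq) _ f

theorem dBTW_marginal_fst (hq : 0 < q) (a : ℤ) :
    ∑ᶠ p : ℤ × ℤ × ℤ, (if p.1 = a then dBTW q p else 0) =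
      if a = -1 ∨ a = (q : ℤ) then 1 / 2 else 0 := by
  rw [finsum_ite_dBTW q fun x _ _ => x = a]
  simp only [sum_ite_irrel, sum_const_zero, sum_ite_eq', sum_const, Int.card_Ico, sub_zero,
    Int.toNat_natCast, nsmul_one, mem_insert, mem_singleton]
  split_ifs
  · field_simp
  · simp

theorem dBTW_marginal_snd (b : ℤ) :
    ∑ᶠ p : ℤ × ℤ × ℤ, (if p.2.1 = b then dBTW q p else 0) =
      if 0 ≤ b ∧ b < (q : ℤ) then 1 / (q : ℝ) else 0 := by
  rw [finsum_ite_dBTW q fun _ y _ => y = b]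
  simp only [sum_ite_eq', sum_const, card_pair (neg_one_ne_natCast q), mem_Ico]
  split_ifs <;> field_simp <;> ring

theorem dBTW_marginal_thd (hq : 0 < q) (b : ℤ) :
    ∑ᶠ p : ℤ × ℤ × ℤ, (if p.2.2 = b then dBTW q p else 0) =
      if 0 ≤ b ∧ b < (q : ℤ) then 1 / (q : ℝ) else 0 := by
  rw [finsum_ite_dBTW q fun _ _ z => z = b]
  simp only [sum_Ico_dBTWThird hq _ fun z => if z = b then (1 : ℝ) else 0, sum_ite_eq',
    sum_const, card_pair (neg_one_ne_natCast q), mem_Ico]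
  split_ifs <;> field_simp <;> ring

theorem dBTW_joint_fst_snd (a b : ℤ) :
    ∑ᶠ p : ℤ × ℤ × ℤ, (if p.1 = a ∧ p.2.1 = b then dBTW q p else 0) =
      (if a = -1 ∨ a = (q : ℤ) then 1 / 2 else 0) *
        (if 0 ≤ b ∧ b < (q : ℤ) then 1 / (q : ℝ) else 0) := by
  rw [finsum_ite_dBTW q fun x y _ => x = a ∧ y = b]
  simp only [ite_and, sum_ite_irrel, sum_const_zero, sum_ite_eq', mem_insert, mem_singleton,
    mem_Ico]
  split_ifs <;> field_simp <;> ring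

theorem dBTW_joint_fst_thd (hq : 0 < q) (a b : ℤ) :
    ∑ᶠ p : ℤ × ℤ × ℤ, (if p.1 = a ∧ p.2.2 = b then dBTW q p else 0) =
      (if a = -1 ∨ a = (q : ℤ) then 1 / 2 else 0) *
        (if 0 ≤ b ∧ b < (q : ℤ) then 1 / (q : ℝ) else 0) := by
  rw [finsum_ite_dBTW q fun x _ z => x = a ∧ z = b]
  simp only [ite_and, sum_ite_irrel, sum_const_zero,
    sum_Ico_dBTWThird hq _ fun z => if z = b then (1 : ℝ) else 0, sum_ite_eq', mem_insert,
    mem_singleton, mem_Ico]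
  split_ifs <;> field_simp <;> ring

theorem dBTW_neg_one_eq_natCast_swap (hq : 0 < q) (u v : ℤ) :
    dBTW q (-1, u, v) = dBTW q (q, v, u) := by
  have hq' : (0 : ℤ) < q := by exact_mod_cast hq
  simp only [dBTW, if_neg (neg_one_ne_natCast q), if_true, or_true, true_or, true_and]
  refine if_congr ?_ rfl rfl
  rw [eq_emod_iff_modEq hq', eq_emod_iff_modEq hq', Int.modEq_iff_dvd, Int.modEq_iff_dvd,
    ← dvd_neg (b := v + 1 - u), show -(v + 1 - u) = u + -1 - v by ring]
  tauto

theorem support_dBTW_fst_subset (u v : ℤ) :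
    Function.support (fun z => dBTW q (z, u, v)) ⊆ (({-1, (q : ℤ)} : Finset ℤ) : Set ℤ) := by
  intro z hz
  by_contra hz'
  simp only [coe_insert, coe_singleton, Set.mem_insert_iff, Set.mem_singleton_iff] at hz'
  exact hz (if_neg fun h => hz' (by tauto))

theorem finsum_dBTW_swap (hq : 0 < q) (u v : ℤ) :
    ∑ᶠ z : ℤ, dBTW q (z, u, v) = ∑ᶠ z : ℤ, dBTW q (z, v, u) := by
  rw [finsum_eq_sum_of_support_subset _ (support_dBTW_fst_subset u v),
    finsum_eq_sum_of_support_subset _ (support_dBTW_fst_subset v u),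
    sum_pair (neg_one_ne_natCast q), sum_pair (neg_one_ne_natCast q),
    dBTW_neg_one_eq_natCast_swap hq, dBTW_neg_one_eq_natCast_swap hq v u, add_comm]

theorem sub_one_le_sum_extPred_btwPerm3 (hq : 0 < q) {x : ℤ}
    (hx : x ∈ ({-1, (q : ℤ)} : Finset ℤ)) :
    (q : ℝ) - 1 ≤ ∑ y ∈ Ico 0 (q : ℤ), extPred btwPerm3 ![x, y, dBTWThird q x y] := by
  obtain ⟨s, hs, hcard, hone⟩ : ∃ s ⊆ Ico 0 (q : ℤ), (#s : ℝ) = q - 1 ∧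
      ∀ y ∈ s, extPred btwPerm3 ![x, y, dBTWThird q x y] = 1 := by
    rcases mem_insert.1 hx with rfl | hx
    · refine ⟨Ico 1 q, Ico_subset_Ico_left zero_le_one, ?_, fun y hy => ?_⟩
      · rw [Int.card_Ico, show ((q : ℤ) - 1).toNat = q - 1 by omega, Nat.cast_pred hq]
      · obtain ⟨hy₁, hy₂⟩ := mem_Ico.1 hy
        have h : dBTWThird q (-1) y = y - 1 := by
          rw [dBTWThird, if_neg (neg_one_ne_natCast q), ← sub_eq_add_neg]
          exact Int.emod_eq_of_lt (by omega) (by omega)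
        refine extPred_btwPerm3_eq_one (Or.inl ?_)
        simp only [h, Matrix.cons_val_zero, Matrix.cons_val_one, Matrix.cons_val]
        omega
    · rw [mem_singleton.1 hx]
      refine ⟨Ico 0 (q - 1), Ico_subset_Ico_right (by omega), ?_, fun y hy => ?_⟩
      · rw [Int.card_Ico, sub_zero, show ((q : ℤ) - 1).toNat = q - 1 by omega, Nat.cast_pred hq]
      · obtain ⟨hy₁, hy₂⟩ := mem_Ico.1 hy
        have h : dBTWThird q q y = y + 1 := by
          rw [dBTWThird, if_pos rfl]
          exact Int.emod_eq_of_lt (by omega) (by omega)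
        refine extPred_btwPerm3_eq_one (Or.inr ?_)
        simp only [h, Matrix.cons_val_zero, Matrix.cons_val_one, Matrix.cons_val]
        omega
  calc (q : ℝ) - 1 = ∑ y ∈ s, extPred btwPerm3 ![x, y, dBTWThird q x y] := by
        rw [sum_congr rfl hone, sum_const, nsmul_one, hcard]
    _ ≤ _ := sum_le_sum_of_subset_of_nonneg hs fun _ _ _ => extPred_nonneg _ _

theorem one_sub_one_div_le_finsum_dBTW_mul_extPred (hq : 0 < q) :
    1 - 1 / (q : ℝ) ≤ ∑ᶠ p : ℤ × ℤ × ℤ, dBTW q p * extPred btwPerm3 ![p.1, p.2.1, p.2.2] := by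
  rw [finsum_dBTW_mul]
  calc 1 - 1 / (q : ℝ) = 1 / (2 * q) * ∑ x ∈ ({-1, (q : ℤ)} : Finset ℤ), ((q : ℝ) - 1) := by
        rw [sum_const, card_pair (neg_one_ne_natCast q)]
        field_simp
        ring
    _ ≤ _ := by
        gcongr with x hx
        exact sub_one_le_sum_extPred_btwPerm3 hq hx

end

/-- properties of the base distribution `D_BTW`.
(1) the coordinate marginals are uniform on `{-1, q}`, `[q]`, `[q]` respectively;
(2) the second and third coordinates are each independent of the first;
(3) the pair `(y₂, y₃)` is exchangeable;
(4) `E[BTW(x₁, y₂, y₃)] ≥ 1 - 1/q`. -/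
theorem dBTW_properties (q : ℕ) (hq : 2 ≤ q) :
    (∀ a : ℤ, (∑ᶠ p : ℤ × ℤ × ℤ, if p.1 = a then dBTW q p else 0)
        = if a = -1 ∨ a = (q : ℤ) then 1 / 2 else 0) ∧
    (∀ b : ℤ, (∑ᶠ p : ℤ × ℤ × ℤ, if p.2.1 = b then dBTW q p else 0)
        = if 0 ≤ b ∧ b < (q : ℤ) then 1 / (q : ℝ) else 0) ∧
    (∀ b : ℤ, (∑ᶠ p : ℤ × ℤ × ℤ, if p.2.2 = b then dBTW q p else 0)
        = if 0 ≤ b ∧ b < (q : ℤ) then 1 / (q : ℝ) else 0) ∧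
    (∀ a b : ℤ, (∑ᶠ p : ℤ × ℤ × ℤ, if p.1 = a ∧ p.2.1 = b then dBTW q p else 0)
        = (∑ᶠ p : ℤ × ℤ × ℤ, if p.1 = a then dBTW q p else 0) *
          (∑ᶠ p : ℤ × ℤ × ℤ, if p.2.1 = b then dBTW q p else 0)) ∧
    (∀ a b : ℤ, (∑ᶠ p : ℤ × ℤ × ℤ, if p.1 = a ∧ p.2.2 = b then dBTW q p else 0)
        = (∑ᶠ p : ℤ × ℤ × ℤ, if p.1 = a then dBTW q p else 0) *
          (∑ᶠ p : ℤ × ℤ × ℤ, if p.2.2 = b then dBTW q p else 0)) ∧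
    (∀ u v : ℤ, (∑ᶠ z : ℤ, dBTW q (z, u, v)) = ∑ᶠ z : ℤ, dBTW q (z, v, u)) ∧
    (∑ᶠ p : ℤ × ℤ × ℤ, dBTW q p * extPred btwPerm3 ![p.1, p.2.1, p.2.2])
      ≥ 1 - 1 / (q : ℝ) := by
  have hq' : 0 < q := by omega
  refine ⟨dBTW_marginal_fst hq', dBTW_marginal_snd, dBTW_marginal_thd hq', fun a b => ?_,
    fun a b => ?_, finsum_dBTW_swap hq', one_sub_one_div_le_finsum_dBTW_mul_extPred hq'⟩
  · rw [dBTW_joint_fst_snd, dBTW_marginal_fst hq', dBTW_marginal_snd]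
  · rw [dBTW_joint_fst_thd hq', dBTW_marginal_fst hq', dBTW_marginal_thd hq']

end OCSPPaper
end
end

section
/- Let μ be a finitely supported probability distribution on ℤ^3 that is symmetric under swapping the last two coordinates, i.e., μ(z,u,v) = μ(z,v,u) for all (z,u,v) ∈ ℤ^3. Then E_{(z,u,v)∼μ}[BTW(z,u,v)] ≤ 1/2, where BTW is evaluated via its extension to ℤ^3. -/
/-!
Precomposing with the transposition `τ = (1 2)` of the last two coordinates is a bijection
between the permutations compatible with `(z, u, v)` and those compatible with `(z, v, u)`;
it turns the event "the third entry has the middle rank" into "the second entry has the middle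
rank". These two events are disjoint, so `BTW(z, u, v) + BTW(z, v, u) ≤ 1`. Averaging this
pointwise bound against a swap-symmetric `μ` gives `2 · E_μ[BTW] ≤ 1`.
-/

open Classical Finset

noncomputable section
namespace OCSPPaper

section Extension

variable {m : ℕ}

lemma compatiblePerm_comp_iff (a : Fin m → ℤ) (τ σ : Equiv.Perm (Fin m)) :
    compatiblePerm (a ∘ τ) σ ↔ compatiblePerm a (σ * τ⁻¹) := by
  constructor
  · intro h i j hij
    simpa using h (τ⁻¹ i) (τ⁻¹ j) (by simpa using hij)
  · intro h i j hij
    simpa using h (τ i) (τ j) (by simpa using hij)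

lemma extPred_comp_perm (P : Finset (Equiv.Perm (Fin m))) (a : Fin m → ℤ)
    (τ : Equiv.Perm (Fin m)) :
    extPred P (a ∘ τ) = extPred (P.map (Equiv.mulRight τ⁻¹).toEmbedding) a := by
  unfold extPred
  congr 2 <;> refine congrArg Nat.cast (card_equiv (Equiv.mulRight τ⁻¹) fun σ => ?_) <;>
    simp [compatiblePerm_comp_iff, mem_map_equiv]

lemma extPred_union_of_disjoint {P Q : Finset (Equiv.Perm (Fin m))} (h : Disjoint P Q)
    (a : Fin m → ℤ) : extPred (P ∪ Q) a = extPred P a + extPred Q a := by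
  unfold extPred
  rw [← add_div, ← Nat.cast_add, ← card_union_of_disjoint]
  · congr 3
    ext σ
    simp [and_or_left]
  · exact disjoint_filter.2 fun σ _ hP hQ => disjoint_left.1 h hP.2 hQ.2

lemma extPred_le_one (P : Finset (Equiv.Perm (Fin m))) (a : Fin m → ℤ) : extPred P a ≤ 1 :=
  div_le_one_of_le₀ (by exact_mod_cast card_le_card (monotone_filter_right _ fun _ _ => And.left))
    (Nat.cast_nonneg _)

end Extension

lemma extPred_btwPerm3_add_swap_le_one (z u v : ℤ) :
    extPred btwPerm3 ![z, u, v] + extPred btwPerm3 ![z, v, u] ≤ 1 := by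
  have hswap : ![z, v, u] = ![z, u, v] ∘ Equiv.swap 1 2 := by
    ext i
    fin_cases i <;> rfl
  have hdisj :
      Disjoint btwPerm3 (btwPerm3.map (Equiv.mulRight (Equiv.swap 1 2)⁻¹).toEmbedding) := by
    decide
  rw [hswap, extPred_comp_perm, ← extPred_union_of_disjoint hdisj]
  exact extPred_le_one _ _

lemma finsum_mul_le_half_of_add_comp_le_one {α : Type*} {μ f : α → ℝ} (e : α ≃ α)
    (hμ : ∀ p, 0 ≤ μ p) (hsum : ∑ᶠ p, μ p = 1) (he : ∀ p, μ (e p) = μ p)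
    (hf : ∀ p, f p + f (e p) ≤ 1) :
    ∑ᶠ p, μ p * f p ≤ 1 / 2 := by
  have hfin : Function.HasFiniteSupport μ := hasFiniteSupport_of_finsum_eq_one hsum
  have hswap : ∑ᶠ p, μ p * f (e p) = ∑ᶠ p, μ p * f p := by
    simpa only [he] using finsum_comp_equiv e (f := fun p => μ p * f p)
  have hpair : ∑ᶠ p, μ p * f p + ∑ᶠ p, μ p * f (e p) ≤ 1 := calc
    _ = ∑ᶠ p, μ p * (f p + f (e p)) := by
      simp only [mul_add]
      exact (finsum_add_distrib (hfin.mul_left _) (hfin.mul_left _)).symm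
    _ ≤ ∑ᶠ p, μ p :=
      finsum_le_finsum' (hfin.mul_left _) hfin fun p => mul_le_of_le_one_right (hμ p) (hf p)
    _ = 1 := hsum
  linarith

theorem symmetric_btw_le_half_general (μ : ℤ × ℤ × ℤ → ℝ)
    (hnn : ∀ p, 0 ≤ μ p)
    (hsum : ∑ᶠ p : ℤ × ℤ × ℤ, μ p = 1)
    (hsymm : ∀ z u v : ℤ, μ (z, u, v) = μ (z, v, u)) :
    (∑ᶠ p : ℤ × ℤ × ℤ, μ p * extPred btwPerm3 ![p.1, p.2.1, p.2.2]) ≤ 1 / 2 :=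
  finsum_mul_le_half_of_add_comp_le_one ((Equiv.refl ℤ).prodCongr (Equiv.prodComm ℤ ℤ))
    hnn hsum
    (fun ⟨z, u, v⟩ => (hsymm z u v).symm)
    (fun ⟨z, u, v⟩ => extPred_btwPerm3_add_swap_le_one z u v)

/-- swap-symmetric distributions fool betweenness.
If a finitely supported distribution `μ` on `ℤ³` is symmetric under swapping the last two
coordinates, then `E_{(z,u,v)∼μ}[BTW(z,u,v)] ≤ 1/2`. -/
theorem symmetric_btw_le_half (μ : ℤ × ℤ × ℤ → ℝ)
    (hnn : ∀ p, 0 ≤ μ p)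
    (hfin : (Function.support μ).Finite)
    (hsum : ∑ᶠ p : ℤ × ℤ × ℤ, μ p = 1)
    (hsymm : ∀ z u v : ℤ, μ (z, u, v) = μ (z, v, u)) :
    (∑ᶠ p : ℤ × ℤ × ℤ, μ p * extPred btwPerm3 ![p.1, p.2.1, p.2.2]) ≤ 1 / 2 :=
  symmetric_btw_le_half_general μ hnn hsum hsymm

end OCSPPaper
end
end
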